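/- arXiv:2008.12705 — 2 statements merged into one kernel-verified Lean document; each statement's English description precedes it below -/
import Mathlib

section
/- Let A, B ∈ B(H) and let α ≥ 0, β > 0. Then ‖AB‖_{α,β} ≤ √( min{ 4/β, (α+β)/β², 16/(α+β) } ) · ‖A‖_{α,β} · ‖B‖_{α,β}. -/
/-!
The `(α,β)`-norm is equivalent to the operator norm: `√β ‖T‖ ≤ ‖T‖_{α,β} ≤ √(α+β) ‖T‖`, and,
since `‖T‖ ≤ 2 w(T)` by polarization and `√(α+β) w(T) ≤ ‖T‖_{α,β}`, also
`√(α+β) ‖T‖ ≤ 2 ‖T‖_{α,β}`. Hence `‖AB‖_{α,β} ≤ √(α+β) ‖A‖ ‖B‖`, and each of the three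
constants comes from bounding `‖A‖ ‖B‖` by a different pair of these comparisons.
-/

open ContinuousLinearMap

variable {H : Type*} [NormedAddCommGroup H] [InnerProductSpace ℂ H] [CompleteSpace H]

/-- The numerical radius `w(T) = sup {|⟨Tx,x⟩| : ‖x‖ = 1}`. -/
noncomputable def numRad (T : H →L[ℂ] H) : ℝ :=
  sSup {r : ℝ | ∃ x : H, ‖x‖ = 1 ∧ r = ‖(inner ℂ (T x) x : ℂ)‖}

/-- The `(α,β)`-norm `‖T‖_{α,β} = sup {√(α|⟨Tx,x⟩|² + β‖Tx‖²) : ‖x‖ = 1}`. -/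
noncomputable def abNorm (α β : ℝ) (T : H →L[ℂ] H) : ℝ :=
  sSup {r : ℝ | ∃ x : H, ‖x‖ = 1 ∧
    r = Real.sqrt (α * ‖(inner ℂ (T x) x : ℂ)‖ ^ 2 + β * ‖T x‖ ^ 2)}

open scoped InnerProductSpace

section

variable {E : Type*} [NormedAddCommGroup E] [InnerProductSpace ℂ E]

lemma norm_ofReal_smul {V : Type*} [SeminormedAddCommGroup V] [NormedSpace ℂ V] {r : ℝ}
    (hr : 0 ≤ r) (v : V) : ‖(r : ℂ) • v‖ = r * ‖v‖ := by
  rw [norm_smul, Complex.norm_of_nonneg hr]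

lemma norm_inner_map_self_le_of_norm_eq_one {T : E →L[ℂ] E} {c : ℝ}
    (hT : ∀ x, ‖x‖ = 1 → ‖⟪T x, x⟫_ℂ‖ ≤ c) (x : E) : ‖⟪T x, x⟫_ℂ‖ ≤ c * ‖x‖ ^ 2 := by
  rcases eq_or_ne x 0 with rfl | hx
  · simp
  have h := hT _ (norm_smul_inv_norm (𝕜 := ℂ) hx)
  simp only [map_smul, inner_smul_left, inner_smul_right, norm_mul, RCLike.norm_conj, norm_inv,
    RCLike.norm_ofReal, abs_norm] at h
  calc ‖⟪T x, x⟫_ℂ‖ = ‖x‖ ^ 2 * (‖x‖⁻¹ * (‖x‖⁻¹ * ‖⟪T x, x⟫_ℂ‖)) := by field_simp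
    _ ≤ c * ‖x‖ ^ 2 := by rw [mul_comm c]; gcongr

lemma norm_inner_map_le_of_norm_inner_map_self_le {T : E →L[ℂ] E} {c : ℝ}
    (hT : ∀ x, ‖⟪T x, x⟫_ℂ‖ ≤ c * ‖x‖ ^ 2) (x y : E) :
    ‖⟪T x, y⟫_ℂ‖ ≤ c * (‖x‖ ^ 2 + ‖y‖ ^ 2) := by
  have hIy : ‖Complex.I • y‖ = ‖y‖ := by simp [norm_smul]
  have hpar := parallelogram_law_with_norm ℂ x y
  have hpar' := parallelogram_law_with_norm ℂ x (Complex.I • y)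
  rw [hIy] at hpar'
  have h := inner_map_polarization' (T : E →ₗ[ℂ] E) x y
  simp only [coe_coe] at h
  rw [h, norm_div, Complex.norm_ofNat, div_le_iff₀ four_pos]
  calc _ ≤ ‖⟪T (x + y), x + y⟫_ℂ‖ + ‖⟪T (x - y), x - y⟫_ℂ‖
        + ‖⟪T (x + Complex.I • y), x + Complex.I • y⟫_ℂ‖
        + ‖⟪T (x - Complex.I • y), x - Complex.I • y⟫_ℂ‖ := by
        refine (norm_add_le _ _).trans (add_le_add ((norm_sub_le _ _).trans
          (add_le_add (norm_sub_le _ _) ?_)) ?_) <;>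
            simp only [norm_mul, Complex.norm_I, one_mul, le_refl]
    _ ≤ c * ‖x + y‖ ^ 2 + c * ‖x - y‖ ^ 2 + c * ‖x + Complex.I • y‖ ^ 2
        + c * ‖x - Complex.I • y‖ ^ 2 := by gcongr <;> exact hT _
    _ = c * (‖x‖ ^ 2 + ‖y‖ ^ 2) * 4 := by linear_combination c * (hpar + hpar')

lemma opNorm_le_two_mul_of_norm_inner_map_self_le {T : E →L[ℂ] E} {c : ℝ} (hc : 0 ≤ c)
    (hT : ∀ x, ‖x‖ = 1 → ‖⟪T x, x⟫_ℂ‖ ≤ c) : ‖T‖ ≤ 2 * c := by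
  refine opNorm_le_of_re_inner_le (by positivity) fun x y hx hy ↦ ?_
  calc RCLike.re ⟪T x, y⟫_ℂ ≤ ‖⟪T x, y⟫_ℂ‖ := RCLike.re_le_norm _
    _ ≤ c * (‖x‖ ^ 2 + ‖y‖ ^ 2) := norm_inner_map_le_of_norm_inner_map_self_le
          (norm_inner_map_self_le_of_norm_eq_one hT) x y
    _ = 2 * c := by rw [hx, hy]; ring

lemma norm_inner_map_self_le_norm_map (T : E →L[ℂ] E) {x : E} (hx : ‖x‖ = 1) :
    ‖⟪T x, x⟫_ℂ‖ ≤ ‖T x‖ := by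
  simpa [hx] using norm_inner_le_norm (𝕜 := ℂ) (T x) x

lemma add_mul_norm_inner_map_self_sq_le {α β : ℝ} (hα : 0 ≤ α) (hβ : 0 ≤ β) (T : E →L[ℂ] E)
    {x : E} (hx : ‖x‖ = 1) :
    α * ‖⟪T x, x⟫_ℂ‖ ^ 2 + β * ‖T x‖ ^ 2 ≤ (α + β) * ‖T‖ ^ 2 := by
  have hTx : ‖T x‖ ≤ ‖T‖ := by simpa [hx] using T.le_opNorm x
  calc α * ‖⟪T x, x⟫_ℂ‖ ^ 2 + β * ‖T x‖ ^ 2 ≤ α * ‖T‖ ^ 2 + β * ‖T‖ ^ 2 := by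
        gcongr
        exact (norm_inner_map_self_le_norm_map T hx).trans hTx
    _ = (α + β) * ‖T‖ ^ 2 := by ring

variable {α β : ℝ}

lemma abNorm_nonneg (α β : ℝ) (T : E →L[ℂ] E) : 0 ≤ abNorm α β T :=
  Real.sSup_nonneg (by rintro r ⟨x, -, rfl⟩; positivity)

lemma bddAbove_abNorm (hα : 0 ≤ α) (hβ : 0 ≤ β) (T : E →L[ℂ] E) :
    BddAbove {r : ℝ | ∃ x : E, ‖x‖ = 1 ∧
      r = Real.sqrt (α * ‖⟪T x, x⟫_ℂ‖ ^ 2 + β * ‖T x‖ ^ 2)} :=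
  ⟨Real.sqrt ((α + β) * ‖T‖ ^ 2), by
    rintro r ⟨x, hx, rfl⟩
    exact Real.sqrt_le_sqrt (add_mul_norm_inner_map_self_sq_le hα hβ T hx)⟩

lemma sqrt_le_abNorm (hα : 0 ≤ α) (hβ : 0 ≤ β) (T : E →L[ℂ] E) {x : E} (hx : ‖x‖ = 1) :
    Real.sqrt (α * ‖⟪T x, x⟫_ℂ‖ ^ 2 + β * ‖T x‖ ^ 2) ≤ abNorm α β T :=
  le_csSup (bddAbove_abNorm hα hβ T) ⟨x, hx, rfl⟩

lemma abNorm_le_sqrt_mul_opNorm (hα : 0 ≤ α) (hβ : 0 ≤ β) (T : E →L[ℂ] E) :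
    abNorm α β T ≤ Real.sqrt (α + β) * ‖T‖ := by
  refine Real.sSup_le ?_ (by positivity)
  rintro r ⟨x, hx, rfl⟩
  rw [← Real.sqrt_sq (norm_nonneg T), ← Real.sqrt_mul (by positivity)]
  exact Real.sqrt_le_sqrt (add_mul_norm_inner_map_self_sq_le hα hβ T hx)

lemma sqrt_mul_opNorm_le_abNorm (hα : 0 ≤ α) (hβ : 0 ≤ β) (T : E →L[ℂ] E) :
    Real.sqrt β * ‖T‖ ≤ abNorm α β T := by
  rw [← norm_ofReal_smul (Real.sqrt_nonneg β)]
  refine opNorm_le_of_unit_norm (abNorm_nonneg α β T) fun x hx ↦ ?_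
  calc ‖((Real.sqrt β : ℂ) • T) x‖ = Real.sqrt (β * ‖T x‖ ^ 2) := by
        rw [smul_apply, norm_ofReal_smul (Real.sqrt_nonneg β), Real.sqrt_mul hβ,
          Real.sqrt_sq (norm_nonneg _)]
    _ ≤ Real.sqrt (α * ‖⟪T x, x⟫_ℂ‖ ^ 2 + β * ‖T x‖ ^ 2) :=
        Real.sqrt_le_sqrt (le_add_of_nonneg_left (by positivity))
    _ ≤ abNorm α β T := sqrt_le_abNorm hα hβ T hx

lemma sqrt_add_mul_opNorm_le_two_mul_abNorm (hα : 0 ≤ α) (hβ : 0 ≤ β) (T : E →L[ℂ] E) :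
    Real.sqrt (α + β) * ‖T‖ ≤ 2 * abNorm α β T := by
  rw [← norm_ofReal_smul (Real.sqrt_nonneg _)]
  refine opNorm_le_two_mul_of_norm_inner_map_self_le (abNorm_nonneg α β T) fun x hx ↦ ?_
  calc ‖⟪((Real.sqrt (α + β) : ℂ) • T) x, x⟫_ℂ‖ = Real.sqrt ((α + β) * ‖⟪T x, x⟫_ℂ‖ ^ 2) := by
        rw [smul_apply, inner_smul_left, norm_mul, RCLike.norm_conj,
          Complex.norm_of_nonneg (Real.sqrt_nonneg _), Real.sqrt_mul (by positivity),
          Real.sqrt_sq (norm_nonneg _)]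
    _ ≤ Real.sqrt (α * ‖⟪T x, x⟫_ℂ‖ ^ 2 + β * ‖T x‖ ^ 2) := by
        gcongr Real.sqrt ?_
        rw [add_mul]
        gcongr
        exact norm_inner_map_self_le_norm_map T hx
    _ ≤ abNorm α β T := sqrt_le_abNorm hα hβ T hx

end

lemma sqrt_add_mul_mul_le_sqrt_min_mul_mul {α β p q a b : ℝ} (hα : 0 ≤ α) (hβ : 0 < β)
    (hp : 0 ≤ p) (hq : 0 ≤ q)
    (hpa : Real.sqrt β * p ≤ a) (hpa' : Real.sqrt (α + β) * p ≤ 2 * a)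
    (hqb : Real.sqrt β * q ≤ b) (hqb' : Real.sqrt (α + β) * q ≤ 2 * b) :
    Real.sqrt (α + β) * (p * q) ≤
      Real.sqrt (min (min (4 / β) ((α + β) / β ^ 2)) (16 / (α + β))) * a * b := by
  have hαβ : 0 < α + β := by linarith
  have square {s x y : ℝ} (hs : 0 ≤ s) (h : Real.sqrt s * x ≤ y) (hx : 0 ≤ x) :
      s * x ^ 2 ≤ y ^ 2 := by
    simpa [mul_pow, Real.sq_sqrt hs] using pow_le_pow_left₀ (by positivity) h 2
  have hpβ := square hβ.le hpa hp
  have hqβ := square hβ.le hqb hq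
  have hp4 := square hαβ.le hpa' hp
  have hq4 := square hαβ.le hqb' hq
  have key : (α + β) * (p * q) ^ 2 ≤
      min (min (4 / β) ((α + β) / β ^ 2)) (16 / (α + β)) * (a * b) ^ 2 := by
    rw [min_mul_of_nonneg _ _ (sq_nonneg _), min_mul_of_nonneg _ _ (sq_nonneg _)]
    refine le_min (le_min ?_ ?_) ?_ <;> rw [div_mul_eq_mul_div, le_div_iff₀ (by positivity)]
    · nlinarith [mul_le_mul hp4 hqβ (by positivity) (by positivity)]
    · nlinarith [mul_le_mul hpβ hqβ (by positivity) (by positivity)]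
    · nlinarith [mul_le_mul hp4 hq4 (by positivity) (by positivity)]
  have hab : 0 ≤ a * b :=
    mul_nonneg ((by positivity : 0 ≤ Real.sqrt β * p).trans hpa)
      ((by positivity : 0 ≤ Real.sqrt β * q).trans hqb)
  calc Real.sqrt (α + β) * (p * q) = Real.sqrt ((α + β) * (p * q) ^ 2) := by
        rw [Real.sqrt_mul hαβ.le, Real.sqrt_sq (by positivity)]
    _ ≤ Real.sqrt (min (min (4 / β) ((α + β) / β ^ 2)) (16 / (α + β)) * (a * b) ^ 2) :=
        Real.sqrt_le_sqrt key
    _ = _ := by rw [Real.sqrt_mul' _ (sq_nonneg _), Real.sqrt_sq hab, mul_assoc]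

/-- Bound for the `(α,β)`-norm of a product. -/
theorem abNorm_mul_le (A B : H →L[ℂ] H) (α β : ℝ) (hα : 0 ≤ α) (hβ : 0 < β) :
    abNorm α β (A * B) ≤
      Real.sqrt (min (min (4 / β) ((α + β) / β ^ 2)) (16 / (α + β))) *
        abNorm α β A * abNorm α β B := by
  calc abNorm α β (A * B) ≤ Real.sqrt (α + β) * ‖A * B‖ :=
        abNorm_le_sqrt_mul_opNorm hα hβ.le _
    _ ≤ Real.sqrt (α + β) * (‖A‖ * ‖B‖) := by gcongr; exact opNorm_comp_le A B
    _ ≤ _ := sqrt_add_mul_mul_le_sqrt_min_mul_mul hα hβ (norm_nonneg A) (norm_nonneg B)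
        (sqrt_mul_opNorm_le_abNorm hα hβ.le A) (sqrt_add_mul_opNorm_le_two_mul_abNorm hα hβ.le A)
        (sqrt_mul_opNorm_le_abNorm hα hβ.le B) (sqrt_add_mul_opNorm_le_two_mul_abNorm hα hβ.le B)
end

section
/- Let T ∈ B(H) and let α, β ≥ 0 with (α,β) ≠ (0,0). Then ‖T‖_{α,β}² ≤ (α/2)·w(T²) + ‖ (α/4)(T*T + TT*) + β·T*T ‖, and consequently w(T)² ≤ (1/(α+β)) · [ (α/2)·w(T²) + ‖ (α/4)(T*T + TT*) + β·T*T ‖ ]. -/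
/-!
Fix a unit vector `x`. Buzano's inequality `|⟨a, x⟩⟨x, b⟩| ≤ (‖a‖‖b‖ + |⟨a, b⟩|) / 2`, applied to
`a = Tx`, `b = T*x`, together with AM-GM gives
`|⟨Tx, x⟩|² ≤ ¼ ⟨(T*T + TT*)x, x⟩ + ½ |⟨T²x, x⟩|`.
Multiplying by `α` and adding `β‖Tx‖² = β⟨T*Tx, x⟩` bounds `α|⟨Tx, x⟩|² + β‖Tx‖²` by
`(α/2) w(T²) + ⟨Sx, x⟩ ≤ (α/2) w(T²) + ‖S‖`, where `S = (α/4)(T*T + TT*) + βT*T`; taking the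
supremum over `x` gives the first inequality. The second follows pointwise from
`(α + β)|⟨Tx, x⟩|² ≤ α|⟨Tx, x⟩|² + β‖Tx‖²`.
-/

open ContinuousLinearMap

variable {H : Type*} [NormedAddCommGroup H] [InnerProductSpace ℂ H] [CompleteSpace H]

open RCLike
open scoped InnerProductSpace

section Scalars

variable {𝕜 E : Type*} [RCLike 𝕜] [NormedAddCommGroup E] [InnerProductSpace 𝕜 E]

lemma reflection_span_singleton_apply_of_norm_eq_one {e : E} (he : ‖e‖ = 1) (a : E) :
    (𝕜 ∙ e).reflection a = (2 : 𝕜) • ⟪e, a⟫_𝕜 • e - a := by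
  rw [Submodule.reflection_singleton_apply, he]
  simp [ofNat_smul_eq_nsmul]

/-- Buzano's inequality. -/
lemma norm_inner_mul_inner_le_of_norm_eq_one {e : E} (he : ‖e‖ = 1) (a b : E) :
    ‖⟪a, e⟫_𝕜 * ⟪e, b⟫_𝕜‖ ≤ (‖a‖ * ‖b‖ + ‖⟪a, b⟫_𝕜‖) / 2 := by
  -- `2 ⟪e, a⟫ e - a` is the reflection of `a` in the line through `e`, an isometry.
  have hsplit : (2 : 𝕜) * (⟪a, e⟫_𝕜 * ⟪e, b⟫_𝕜) = ⟪(𝕜 ∙ e).reflection a, b⟫_𝕜 + ⟪a, b⟫_𝕜 := by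
    rw [reflection_span_singleton_apply_of_norm_eq_one he, inner_sub_left, inner_smul_left,
      inner_smul_left, inner_conj_symm, map_ofNat]
    ring
  have : 2 * ‖⟪a, e⟫_𝕜 * ⟪e, b⟫_𝕜‖ ≤ ‖a‖ * ‖b‖ + ‖⟪a, b⟫_𝕜‖ :=
    calc 2 * ‖⟪a, e⟫_𝕜 * ⟪e, b⟫_𝕜‖ = ‖⟪(𝕜 ∙ e).reflection a, b⟫_𝕜 + ⟪a, b⟫_𝕜‖ := by
          rw [← hsplit, norm_mul (2 : 𝕜), RCLike.norm_two]
      _ ≤ ‖(𝕜 ∙ e).reflection a‖ * ‖b‖ + ‖⟪a, b⟫_𝕜‖ :=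
          (norm_add_le _ _).trans (add_le_add_left (norm_inner_le_norm _ _) _)
      _ = ‖a‖ * ‖b‖ + ‖⟪a, b⟫_𝕜‖ := by rw [LinearIsometryEquiv.norm_map]
  linarith

lemma re_inner_apply_self_le_opNorm (S : E →L[𝕜] E) {x : E} (hx : ‖x‖ = 1) :
    re ⟪S x, x⟫_𝕜 ≤ ‖S‖ :=
  calc re ⟪S x, x⟫_𝕜 ≤ ‖S x‖ * ‖x‖ := re_inner_le_norm _ _
    _ ≤ ‖S‖ := by simpa [hx] using S.le_opNorm x

lemma add_mul_norm_inner_apply_self_sq_le {α β : ℝ} (hβ : 0 ≤ β) (T : E →L[𝕜] E) {x : E}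
    (hx : ‖x‖ = 1) :
    (α + β) * ‖⟪T x, x⟫_𝕜‖ ^ 2 ≤ α * ‖⟪T x, x⟫_𝕜‖ ^ 2 + β * ‖T x‖ ^ 2 := by
  have : ‖⟪T x, x⟫_𝕜‖ ≤ ‖T x‖ := by simpa [hx] using norm_inner_le_norm (𝕜 := 𝕜) (T x) x
  have : ‖⟪T x, x⟫_𝕜‖ ^ 2 ≤ ‖T x‖ ^ 2 := by gcongr
  linarith [mul_le_mul_of_nonneg_left this hβ]

section Complete

variable [CompleteSpace E]

lemma norm_inner_apply_self_sq_le (T : E →L[𝕜] E) {x : E} (hx : ‖x‖ = 1) :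
    ‖⟪T x, x⟫_𝕜‖ ^ 2 ≤ (‖T x‖ ^ 2 + ‖adjoint T x‖ ^ 2) / 4 + ‖⟪(T ^ 2) x, x⟫_𝕜‖ / 2 := by
  have hbuzano := norm_inner_mul_inner_le_of_norm_eq_one (𝕜 := 𝕜) hx (T x) (adjoint T x)
  rw [adjoint_inner_right, adjoint_inner_right, ← pow_two, norm_pow] at hbuzano
  have hamgm : ‖T x‖ * ‖adjoint T x‖ ≤ (‖T x‖ ^ 2 + ‖adjoint T x‖ ^ 2) / 2 := by
    nlinarith [sq_nonneg (‖T x‖ - ‖adjoint T x‖)]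
  rw [sq T, mul_apply_eq_comp]
  linarith

end Complete

end Scalars

section NumericalRadius

variable {E : Type*} [NormedAddCommGroup E] [InnerProductSpace ℂ E]

lemma numRad_nonneg (T : E →L[ℂ] E) : 0 ≤ numRad T :=
  Real.sSup_nonneg (by rintro _ ⟨x, -, rfl⟩; positivity)

lemma norm_inner_apply_self_le_numRad (T : E →L[ℂ] E) {x : E} (hx : ‖x‖ = 1) :
    ‖⟪T x, x⟫_ℂ‖ ≤ numRad T := by
  refine le_csSup ⟨‖T‖, ?_⟩ ⟨x, hx, rfl⟩
  rintro _ ⟨y, hy, rfl⟩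
  simpa [hy] using (norm_inner_le_norm (𝕜 := ℂ) (T y) y).trans
    (mul_le_mul_of_nonneg_right (T.le_opNorm y) (norm_nonneg y))

lemma numRad_sq_le {T : E →L[ℂ] E} {C : ℝ} (hC : 0 ≤ C)
    (h : ∀ x : E, ‖x‖ = 1 → ‖⟪T x, x⟫_ℂ‖ ^ 2 ≤ C) : numRad T ^ 2 ≤ C := by
  refine (Real.le_sqrt (numRad_nonneg T) hC).1 (Real.sSup_le ?_ (Real.sqrt_nonneg C))
  rintro _ ⟨x, hx, rfl⟩
  exact (Real.le_sqrt (norm_nonneg _) hC).2 (h x hx)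

lemma abNorm_sq_le {α β C : ℝ} {T : E →L[ℂ] E} (hC : 0 ≤ C)
    (h : ∀ x : E, ‖x‖ = 1 → α * ‖⟪T x, x⟫_ℂ‖ ^ 2 + β * ‖T x‖ ^ 2 ≤ C) :
    abNorm α β T ^ 2 ≤ C := by
  have hnonneg : 0 ≤ abNorm α β T := Real.sSup_nonneg (by rintro _ ⟨x, -, rfl⟩; positivity)
  refine (Real.le_sqrt hnonneg hC).1 (Real.sSup_le ?_ (Real.sqrt_nonneg C))
  rintro _ ⟨x, hx, rfl⟩
  exact Real.sqrt_le_sqrt (h x hx)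

end NumericalRadius

lemma re_inner_smul_add_smul_apply_self (α β : ℝ) (T : H →L[ℂ] H) (x : H) :
    re ⟪(((α / 4 : ℝ) : ℂ) • (adjoint T * T + T * adjoint T) +
        ((β : ℝ) : ℂ) • (adjoint T * T)) x, x⟫_ℂ =
      α / 4 * (‖T x‖ ^ 2 + ‖adjoint T x‖ ^ 2) + β * ‖T x‖ ^ 2 := by
  rw [apply_norm_sq_eq_inner_adjoint_left T, apply_norm_sq_eq_inner_adjoint_left (adjoint T),
    adjoint_adjoint]
  simp only [add_apply, smul_apply, mul_apply_eq_comp, comp_apply, inner_add_left, inner_smul_left,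
    Complex.conj_ofReal, re_to_complex, Complex.add_re, Complex.re_ofReal_mul]

lemma mul_norm_inner_sq_add_mul_norm_sq_le {α : ℝ} (hα : 0 ≤ α) (β : ℝ) (T : H →L[ℂ] H)
    {x : H} (hx : ‖x‖ = 1) :
    α * ‖⟪T x, x⟫_ℂ‖ ^ 2 + β * ‖T x‖ ^ 2 ≤ α / 2 * numRad (T ^ 2) +
      ‖((α / 4 : ℝ) : ℂ) • (adjoint T * T + T * adjoint T) + ((β : ℝ) : ℂ) • (adjoint T * T)‖ :=
  calc α * ‖⟪T x, x⟫_ℂ‖ ^ 2 + β * ‖T x‖ ^ 2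
      ≤ α * ((‖T x‖ ^ 2 + ‖adjoint T x‖ ^ 2) / 4 + ‖⟪(T ^ 2) x, x⟫_ℂ‖ / 2) + β * ‖T x‖ ^ 2 := by
        gcongr; exact norm_inner_apply_self_sq_le T hx
    _ = α / 2 * ‖⟪(T ^ 2) x, x⟫_ℂ‖ + re ⟪(((α / 4 : ℝ) : ℂ) • (adjoint T * T + T * adjoint T) +
        ((β : ℝ) : ℂ) • (adjoint T * T)) x, x⟫_ℂ := by
        rw [re_inner_smul_add_smul_apply_self]; ring
    _ ≤ _ := by
        gcongr
        · exact norm_inner_apply_self_le_numRad _ hx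
        · exact re_inner_apply_self_le_opNorm _ hx

/-- `‖T‖²_{α,β} ≤ (α/2)w(T²) + ‖(α/4)(T*T + TT*) + βT*T‖`, hence
`w(T)² ≤ (1/(α+β))·[(α/2)w(T²) + ‖(α/4)(T*T + TT*) + βT*T‖]`. -/
theorem abNorm_sq_le_numRad_sq (T : H →L[ℂ] H) (α β : ℝ) (hα : 0 ≤ α) (hβ : 0 ≤ β)
    (hαβ : (α, β) ≠ (0, 0)) :
    abNorm α β T ^ 2 ≤ (α / 2) * numRad (T ^ 2) +
        ‖((α / 4 : ℝ) : ℂ) • (adjoint T * T + T * adjoint T) +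
          ((β : ℝ) : ℂ) • (adjoint T * T)‖ ∧
      numRad T ^ 2 ≤ (1 / (α + β)) * ((α / 2) * numRad (T ^ 2) +
        ‖((α / 4 : ℝ) : ℂ) • (adjoint T * T + T * adjoint T) +
          ((β : ℝ) : ℂ) • (adjoint T * T)‖) := by
  have hbound := fun x (hx : ‖x‖ = 1) ↦ mul_norm_inner_sq_add_mul_norm_sq_le hα β T hx
  have hC : 0 ≤ (α / 2) * numRad (T ^ 2) + ‖((α / 4 : ℝ) : ℂ) • (adjoint T * T + T * adjoint T) +
      ((β : ℝ) : ℂ) • (adjoint T * T)‖ := by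
    have := numRad_nonneg (T ^ 2); positivity
  have hsum : 0 < α + β := by
    by_contra! h
    exact hαβ (Prod.ext (by linarith) (by linarith))
  refine ⟨abNorm_sq_le hC hbound, numRad_sq_le (by positivity) fun x hx ↦ ?_⟩
  rw [one_div_mul_eq_div, le_div_iff₀' hsum]
  exact (add_mul_norm_inner_apply_self_sq_le hβ T hx).trans (hbound x hx)
end
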